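/- The vector field V(z) = i(f z² + ω z + conj(f)) on the closed unit disc is tangent to every hyperbolic Killing direction in the sense that its flow preserves the cross-ratio quantity: for solutions z₁(t), z₂(t) of ż = i(f(t) z² + ω z + conj(f(t))) with values in the open unit disc, the pseudo-hyperbolic distance |z₁(t) - z₂(t)|/|1 - conj(z₁(t)) z₂(t)| is constant in t. -/

import Mathlib

/-!
Writing `V(z) = i(f z² + ω z + f̄)`, both `u = z₁ - z₂` and `v = 1 - z̄₁ z₂` satisfy linear
equations `u̇ = a u`, `v̇ = b v` with `a = i(f(z₁ + z₂) + ω)` and `b = i(f z₂ - conj (f z₁))`.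
Since `Re a = Re b = -Im (f(z₁ + z₂))`, the squared moduli `|u|²` and `|v|²` grow at the same
logarithmic rate `2 Re a`, so their ratio `ρ` is constant (`v ≠ 0` inside the disc).
-/

open Complex ComplexConjugate

theorem HasDerivAt.norm_sq_of_mul_self {u : ℝ → ℂ} {a : ℂ} {t : ℝ}
    (hu : HasDerivAt u (a * u t) t) :
    HasDerivAt (‖u ·‖ ^ 2) (2 * a.re * ‖u t‖ ^ 2) t := by
  convert hu.norm_sq using 1
  rw [Complex.inner, mul_assoc a, mul_conj, re_mul_ofReal, normSq_eq_norm_sq, mul_assoc]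

theorem norm_sq_div_norm_sq_eq_of_hasDerivAt_mul_self {u v a b : ℝ → ℂ}
    (hu : ∀ t, HasDerivAt u (a t * u t) t) (hv : ∀ t, HasDerivAt v (b t * v t) t)
    (hab : ∀ t, (a t).re = (b t).re) (hv0 : ∀ t, v t ≠ 0) (t s : ℝ) :
    ‖u t‖ ^ 2 / ‖v t‖ ^ 2 = ‖u s‖ ^ 2 / ‖v s‖ ^ 2 := by
  have hderiv (x : ℝ) : HasDerivAt (fun x => ‖u x‖ ^ 2 / ‖v x‖ ^ 2) 0 x := by
    have hnu := (hu x).norm_sq_of_mul_self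
    have hnv := (hv x).norm_sq_of_mul_self
    rw [← hab] at hnv
    exact (hnu.fun_div hnv (by simpa using hv0 x)).congr_deriv (by ring)
  exact is_const_of_deriv_eq_zero (fun x => (hderiv x).differentiableAt)
    (fun x => (hderiv x).deriv) t s

theorem one_sub_conj_mul_ne_zero {z w : ℂ} (hz : ‖z‖ < 1) (hw : ‖w‖ < 1) :
    1 - conj z * w ≠ 0 := by
  refine sub_ne_zero.mpr fun h => ?_
  have : ‖conj z * w‖ < 1 := by
    rw [norm_mul, RCLike.norm_conj]
    exact mul_lt_one_of_nonneg_of_lt_one_left (norm_nonneg _) hz hw.le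
  rw [← h, norm_one] at this
  exact lt_irrefl _ this

section SwarmField

variable (c : ℂ) (ω : ℝ)

def swarmField (z : ℂ) : ℂ := I * (c * z ^ 2 + ω * z + conj c)

theorem swarmField_sub_swarmField (z w : ℂ) :
    swarmField c ω z - swarmField c ω w = I * (c * (z + w) + ω) * (z - w) := by
  unfold swarmField
  ring

theorem conj_swarmField_mul_add_conj_mul_swarmField (z w : ℂ) :
    conj (swarmField c ω z) * w + conj z * swarmField c ω w =
      -(I * (c * w - conj (c * z)) * (1 - conj z * w)) := by
  simp only [swarmField, map_mul, map_add, map_pow, conj_I, conj_ofReal, conj_conj]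
  ring

theorem re_I_mul_add_eq_re_I_mul_sub_conj (z w : ℂ) :
    (I * (c * (z + w) + ω)).re = (I * (c * w - conj (c * z))).re := by
  rw [I_mul_re, I_mul_re, mul_add]
  simp only [add_im, sub_im, conj_im, ofReal_im]
  ring

end SwarmField

theorem swarm_preserves_pseudoHyperbolic_distance_general (f : ℝ → ℂ) (ω : ℝ)
    (z₁ z₂ : ℝ → ℂ) (hz₁ : ∀ t, ‖z₁ t‖ < 1) (hz₂ : ∀ t, ‖z₂ t‖ < 1)
    (hd₁ : ∀ t, HasDerivAt z₁
      (Complex.I * (f t * z₁ t ^ 2 + (ω : ℂ) * z₁ t + (starRingEnd ℂ) (f t))) t)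
    (hd₂ : ∀ t, HasDerivAt z₂
      (Complex.I * (f t * z₂ t ^ 2 + (ω : ℂ) * z₂ t + (starRingEnd ℂ) (f t))) t)
    (ρ : ℝ → ℝ)
    (hρ : ∀ t, ρ t = ‖z₁ t - z₂ t‖ ^ 2 /
      ‖1 - (starRingEnd ℂ) (z₁ t) * z₂ t‖ ^ 2) :
    ∀ t : ℝ, ρ t = ρ 0 := by
  have hdiff (t : ℝ) : HasDerivAt (fun s => z₁ s - z₂ s)
      (I * (f t * (z₁ t + z₂ t) + ω) * (z₁ t - z₂ t)) t := by
    rw [← swarmField_sub_swarmField]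
    exact (hd₁ t).sub (hd₂ t)
  have hdenom (t : ℝ) : HasDerivAt (fun s => 1 - conj (z₁ s) * z₂ s)
      (I * (f t * z₂ t - conj (f t * z₁ t)) * (1 - conj (z₁ t) * z₂ t)) t := by
    rw [← neg_neg (_ * _), ← conj_swarmField_mul_add_conj_mul_swarmField (f t) ω]
    exact ((hd₁ t).star.mul (hd₂ t)).const_sub 1
  intro t
  rw [hρ, hρ]
  exact norm_sq_div_norm_sq_eq_of_hasDerivAt_mul_self hdiff hdenom
    (fun s => re_I_mul_add_eq_re_I_mul_sub_conj _ _ _ _)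
    (fun s => one_sub_conj_mul_ne_zero (hz₁ s) (hz₂ s)) t 0

theorem swarm_preserves_pseudoHyperbolic_distance (f : ℝ → ℂ) (hf : Continuous f) (ω : ℝ)
    (z₁ z₂ : ℝ → ℂ) (hz₁ : ∀ t, ‖z₁ t‖ < 1) (hz₂ : ∀ t, ‖z₂ t‖ < 1)
    (hd₁ : ∀ t, HasDerivAt z₁
      (Complex.I * (f t * z₁ t ^ 2 + (ω : ℂ) * z₁ t + (starRingEnd ℂ) (f t))) t)
    (hd₂ : ∀ t, HasDerivAt z₂
      (Complex.I * (f t * z₂ t ^ 2 + (ω : ℂ) * z₂ t + (starRingEnd ℂ) (f t))) t)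
    (ρ : ℝ → ℝ)
    (hρ : ∀ t, ρ t = ‖z₁ t - z₂ t‖ ^ 2 /
      ‖1 - (starRingEnd ℂ) (z₁ t) * z₂ t‖ ^ 2) :
    ∀ t : ℝ, ρ t = ρ 0 :=
  swarm_preserves_pseudoHyperbolic_distance_general f ω z₁ z₂ hz₁ hz₂ hd₁ hd₂ ρ hρ
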